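/- arXiv:0906.5045 — 5 statements merged into one kernel-verified Lean document; each statement's English description precedes it below -/
import Mathlib

section
/- Let K : ℝ → ℝ be continuous, bounded by a non-negative even integrable function, and let bₙ → 0 with n·bₙ → ∞. Then bₙ Σ_{v=1}^{n-1} |K(bₙ v)| converges to ∫_0^∞ |K(x)| dx as n → ∞. -/
/-!
The Riemann sum `h ∑_{v=1}^{N} f (h v)` is the integral over `(0, h N]` of the step function
`x ↦ f (h ⌈x / h⌉)`, which equals `f (h v)` on `(h (v - 1), h v]`. Since `x ≤ h ⌈x / h⌉ < x + h`,
the step functions converge pointwise to `f` as `h → 0`, and for a majorant `F` that is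
non-increasing on `(0, ∞)` they are dominated by `F` itself:
`‖f (h ⌈x / h⌉)‖ ≤ F (h ⌈x / h⌉) ≤ F x`. Dominated convergence finishes the proof.
-/

open MeasureTheory Filter Set Topology

section CeilGrid

variable {h : ℝ}

lemma le_mul_ceil_div (hh : 0 < h) (x : ℝ) : x ≤ h * ⌈x / h⌉ := by
  rw [← div_le_iff₀' hh]
  exact Int.le_ceil _

lemma mul_ceil_div_lt (hh : 0 < h) (x : ℝ) : h * ⌈x / h⌉ < x + h := by
  rw [← lt_div_iff₀' hh, add_div, div_self hh.ne']
  exact Int.ceil_lt_add_one _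

lemma ceil_div_eq_of_mem_Ioc (hh : 0 < h) {x : ℝ} {i : ℕ} (hx : x ∈ Ioc (h * i) (h * (i + 1))) :
    ⌈x / h⌉ = i + 1 := by
  rw [Int.ceil_eq_iff, lt_div_iff₀' hh, div_le_iff₀' hh]
  push_cast
  simpa using hx

lemma tendsto_mul_ceil_div {ι : Type*} {l : Filter ι} {h : ι → ℝ} (hpos : ∀ i, 0 < h i)
    (h0 : Tendsto h l (𝓝 0)) (x : ℝ) : Tendsto (fun i => h i * ⌈x / h i⌉) l (𝓝 x) := by
  have hupper : Tendsto (fun i => x + h i) l (𝓝 x) := by simpa using tendsto_const_nhds.add h0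
  exact tendsto_of_tendsto_of_tendsto_of_le_of_le tendsto_const_nhds hupper
    (fun i => le_mul_ceil_div (hpos i) x) (fun i => (mul_ceil_div_lt (hpos i) x).le)

lemma eqOn_comp_mul_ceil_div {α : Type*} (f : ℝ → α) (hh : 0 < h) (i : ℕ) :
    EqOn (fun x => f (h * ⌈x / h⌉)) (fun _ => f (h * (i + 1))) (Ioc (h * i) (h * (i + 1))) :=
  fun x hx => by simp [ceil_div_eq_of_mem_Ioc hh hx]

end CeilGrid

section StepFunction

variable {E : Type*} [NormedAddCommGroup E] {h : ℝ}

lemma stronglyMeasurable_comp_mul_ceil_div (f : ℝ → E) :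
    StronglyMeasurable fun x => f (h * ⌈x / h⌉) :=
  (StronglyMeasurable.of_discrete (f := fun z : ℤ => f (h * z))).comp_measurable
    (Int.measurable_ceil.comp (measurable_div_const h))

lemma intervalIntegrable_comp_mul_ceil_div (f : ℝ → E) (hh : 0 < h) (i : ℕ) :
    IntervalIntegrable (fun x => f (h * ⌈x / h⌉)) volume (h * i) (h * (i + 1)) := by
  rw [intervalIntegrable_iff_integrableOn_Ioc_of_le (by gcongr; linarith)]
  exact (integrableOn_const measure_Ioc_lt_top.ne).congr_fun
    (eqOn_comp_mul_ceil_div f hh i).symm measurableSet_Ioc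

variable [NormedSpace ℝ E]

theorem tendsto_integral_Ioc_comp_mul_ceil_div {f : ℝ → E} {F : ℝ → ℝ}
    (hf : ContinuousOn f (Ioi 0)) (hF : IntegrableOn F (Ioi 0)) (hF_anti : AntitoneOn F (Ioi 0))
    (hfF : ∀ x ∈ Ioi 0, ‖f x‖ ≤ F x) {ι : Type*} {l : Filter ι} [l.IsCountablyGenerated]
    {h M : ι → ℝ} (hpos : ∀ i, 0 < h i) (h0 : Tendsto h l (𝓝 0)) (hM : Tendsto M l atTop) :
    Tendsto (fun i => ∫ x in Ioc 0 (M i), f (h i * ⌈x / h i⌉)) l (𝓝 (∫ x in Ioi 0, f x)) := by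
  set g : ι → ℝ → E := fun i => (Iic (M i)).indicator fun x => f (h i * ⌈x / h i⌉)
  have hg_integral (i : ι) : ∫ x in Ioi 0, g i x = ∫ x in Ioc 0 (M i), f (h i * ⌈x / h i⌉) := by
    rw [setIntegral_indicator measurableSet_Iic, Ioi_inter_Iic]
  have hg_bound (i : ι) : ∀ x ∈ Ioi 0, ‖g i x‖ ≤ F x := by
    intro x hx
    have hx_le := le_mul_ceil_div (hpos i) x
    calc ‖g i x‖ ≤ ‖f (h i * ⌈x / h i⌉)‖ := norm_indicator_le_norm_self _ _
      _ ≤ F (h i * ⌈x / h i⌉) := hfF _ (lt_of_lt_of_le hx hx_le)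
      _ ≤ F x := hF_anti hx (lt_of_lt_of_le hx hx_le) hx_le
  have hg_lim : ∀ x ∈ Ioi 0, Tendsto (fun i => g i x) l (𝓝 (f x)) := by
    intro x hx
    have hstep := ((hf.continuousAt (isOpen_Ioi.mem_nhds hx)).tendsto).comp
      (tendsto_mul_ceil_div hpos h0 x)
    refine hstep.congr' ?_
    filter_upwards [hM.eventually_ge_atTop x] with i hi
    simp [g, indicator_of_mem (mem_Iic.2 hi)]
  simp_rw [← hg_integral]
  refine tendsto_integral_filter_of_dominated_convergence F
    (Eventually.of_forall fun i => ?_) (Eventually.of_forall fun i => ?_) hF ?_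
  · exact ((stronglyMeasurable_comp_mul_ceil_div (h := h i) f).indicator
      measurableSet_Iic).aestronglyMeasurable
  · exact (ae_restrict_iff' measurableSet_Ioi).2 (Eventually.of_forall (hg_bound i))
  · exact (ae_restrict_iff' measurableSet_Ioi).2 (Eventually.of_forall hg_lim)

variable [CompleteSpace E]

lemma intervalIntegral_comp_mul_ceil_div (f : ℝ → E) (hh : 0 < h) (i : ℕ) :
    ∫ x in (h * i)..(h * (i + 1)), f (h * ⌈x / h⌉) = h • f (h * (i + 1)) := by
  rw [intervalIntegral.integral_of_le (by gcongr; linarith),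
    setIntegral_congr_fun measurableSet_Ioc (eqOn_comp_mul_ceil_div f hh i), setIntegral_const,
    measureReal_def, Real.volume_Ioc, ENNReal.toReal_ofReal (by nlinarith)]
  ring_nf

theorem integral_Ioc_comp_mul_ceil_div (f : ℝ → E) (hh : 0 < h) (N : ℕ) :
    ∫ x in Ioc 0 (h * N), f (h * ⌈x / h⌉) = h • ∑ v ∈ Finset.Icc 1 N, f (h * v) := by
  have hsum := intervalIntegral.sum_integral_adjacent_intervals (a := fun i : ℕ => h * i) (n := N)
    (fun i _ => by simpa using intervalIntegrable_comp_mul_ceil_div f hh i)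
  simp only [Nat.cast_succ, intervalIntegral_comp_mul_ceil_div f hh, Nat.cast_zero,
    mul_zero] at hsum
  rw [← intervalIntegral.integral_of_le (by positivity), ← hsum, ← Finset.smul_sum,
    ← Finset.Ico_add_one_right_eq_Icc, Finset.sum_Ico_eq_sum_range]
  simp [add_comm]

end StepFunction

theorem kernel_riemann_sum_general (K K₁ : ℝ → ℝ) (hK : Continuous K)
    (hK₁_int : Integrable K₁) (hK₁_anti : AntitoneOn K₁ (Ici (0 : ℝ)))
    (hbound : ∀ x, |K x| ≤ K₁ x)
    (b : ℕ → ℝ) (hbpos : ∀ n, 0 < b n)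
    (hb : Tendsto b atTop (nhds 0))
    (hnb : Tendsto (fun n : ℕ => (n : ℝ) * b n) atTop atTop) :
    Tendsto (fun n => b n * ∑ v ∈ Finset.Icc 1 (n - 1), |K (b n * (v : ℝ))|)
      atTop (nhds (∫ x in Ici (0 : ℝ), |K x|)) := by
  have hM : Tendsto (fun n : ℕ => b n * ((n - 1 : ℕ) : ℝ)) atTop atTop := by
    refine (hnb.atTop_add hb.neg).congr' ?_
    filter_upwards [eventually_ge_atTop 1] with n hn
    rw [Nat.cast_sub hn]
    ring
  have hlim := tendsto_integral_Ioc_comp_mul_ceil_div hK.abs.continuousOn hK₁_int.integrableOn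
    (hK₁_anti.mono Ioi_subset_Ici_self) (fun x _ => (abs_abs (K x)).le.trans (hbound x))
    hbpos hb hM
  rw [integral_Ici_eq_integral_Ioi]
  exact hlim.congr fun n => integral_Ioc_comp_mul_ceil_div (fun x => |K x|) (hbpos n) (n - 1)

/-- Kernel Riemann-sum convergence: bₙ Σ_{v=1}^{n-1} |K(bₙ v)| → ∫_0^∞ |K(x)| dx. -/
theorem kernel_riemann_sum (K K₁ : ℝ → ℝ) (hK : Continuous K)
    (hK₁_nonneg : ∀ x, 0 ≤ K₁ x) (hK₁_even : ∀ x, K₁ (-x) = K₁ x)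
    (hK₁_int : Integrable K₁) (hK₁_anti : AntitoneOn K₁ (Ici (0 : ℝ)))
    (hbound : ∀ x, |K x| ≤ K₁ x)
    (b : ℕ → ℝ) (hbpos : ∀ n, 0 < b n)
    (hb : Tendsto b atTop (nhds 0))
    (hnb : Tendsto (fun n : ℕ => (n : ℝ) * b n) atTop atTop) :
    Tendsto (fun n => b n * ∑ v ∈ Finset.Icc 1 (n - 1), |K (b n * (v : ℝ))|)
      atTop (nhds (∫ x in Ici (0 : ℝ), |K x|)) :=
  kernel_riemann_sum_general K K₁ hK hK₁_int hK₁_anti hbound b hbpos hb hnb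
end

section
/- Let φ : ℝ → ℝ be non-negative, integrable, and satisfy lim_{|λ|→∞} |λ|^p φ(λ) = A for some p > 1 and A > 0. If ρₙ → ∞, then for each fixed λ, ρₙ^p · Σ_{l=1}^{∞} φ(λ + 2π l ρₙ) converges to (A/(2π)^p) · Σ_{l=1}^{∞} l^{-p} as n → ∞. -/
/-!
Since `φ x ~ A x⁻ᵖ` as `x → ∞`, each term `ρ ^ p φ (λ + 2π l ρ)` tends to `A / (2π l) ^ p`.
Once `ρ` is large, `λ + 2π l ρ ≥ π l ρ` for all `l ≥ 1` at once, so the terms are bounded by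
`C l⁻ᵖ` uniformly in `ρ`; as `p > 1` this bound is summable, and Tannery's theorem (dominated
convergence for series) passes the limit through the sum.
-/

open MeasureTheory Filter Real Topology

section
variable {ι : Type*} {l : Filter ι} {φ : ℝ → ℝ} {p A : ℝ} {ρ : ι → ℝ}

lemma tendsto_rpow_mul_atTop_of_abs_tail
    (htail : ∀ ε > (0 : ℝ), ∃ M : ℝ, ∀ x : ℝ, M ≤ |x| → |(|x| ^ p * φ x - A)| < ε) :
    Tendsto (fun x => x ^ p * φ x) atTop (𝓝 A) := by
  refine Metric.tendsto_nhds.mpr fun ε hε => ?_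
  obtain ⟨M, hM⟩ := htail ε hε
  filter_upwards [eventually_ge_atTop M, eventually_ge_atTop 0] with x hxM hx0
  have := hM x (hxM.trans (le_abs_self x))
  rwa [abs_of_nonneg hx0] at this

lemma tendsto_rpow_mul_comp_add_mul (hφ : Tendsto (fun x => x ^ p * φ x) atTop (𝓝 A))
    (hρ : Tendsto ρ l atTop) (lam : ℝ) {c : ℝ} (hc : 0 < c) :
    Tendsto (fun i => ρ i ^ p * φ (lam + c * ρ i)) l (𝓝 (A / c ^ p)) := by
  have hx : Tendsto (fun i => lam + c * ρ i) l atTop :=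
    tendsto_atTop_add_const_left _ lam (hρ.const_mul_atTop hc)
  have hratio : Tendsto (fun i => (lam + c * ρ i) / ρ i) l (𝓝 c) := by
    have := ((tendsto_const_nhds (x := lam)).div_atTop hρ).add_const c
    rw [zero_add] at this
    refine this.congr' ?_
    filter_upwards [hρ.eventually_gt_atTop 0] with i hi
    field_simp
  refine ((hφ.comp hx).div (hratio.rpow_const (Or.inl hc.ne')) (by positivity)).congr' ?_
  filter_upwards [hρ.eventually_gt_atTop 0, hx.eventually_gt_atTop 0] with i hρi hxi
  simp only [Pi.div_apply, Function.comp_apply, div_rpow hxi.le hρi.le]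
  field_simp

lemma exists_eventually_norm_rpow_mul_comp_le (hφ0 : ∀ x, 0 ≤ φ x)
    (hφ : Tendsto (fun x => x ^ p * φ x) atTop (𝓝 A)) (hp : 0 ≤ p)
    (hρ : Tendsto ρ l atTop) (lam : ℝ) {c : ℝ} (hc : 0 < c) :
    ∃ C, ∀ᶠ i in l, ∀ t ≥ (1 : ℝ), ‖ρ i ^ p * φ (lam + c * t * ρ i)‖ ≤ C * t ^ (-p) := by
  obtain ⟨M, hM⟩ := eventually_atTop.mp (hφ.eventually (gt_mem_nhds (lt_add_one A)))
  refine ⟨(A + 1) * (2 / c) ^ p, ?_⟩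
  filter_upwards [hρ.eventually_gt_atTop 0, hρ.eventually_ge_atTop (2 * |lam| / c),
    hρ.eventually_ge_atTop (2 * M / c)] with i hρi hlam hMρ t ht
  rw [div_le_iff₀' hc] at hlam hMρ
  set x := lam + c * t * ρ i
  have hct : c * ρ i ≤ c * t * ρ i := by nlinarith [mul_pos hc hρi]
  have hyx : c * t * ρ i / 2 ≤ x := by linarith [neg_abs_le lam]
  have hMx : M ≤ x := by linarith [abs_nonneg lam]
  have hx : 0 < x := by linarith [mul_pos (mul_pos hc (zero_lt_one.trans_le ht)) hρi]
  have hxA : x ^ p * φ x < A + 1 := hM x hMx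
  have hA : 0 ≤ A + 1 := by nlinarith [hφ0 x, rpow_nonneg hx.le p]
  have hφx : φ x ≤ (A + 1) / x ^ p := by
    rw [le_div_iff₀ (by positivity)]; linarith
  calc ‖ρ i ^ p * φ x‖ = ρ i ^ p * φ x := norm_of_nonneg (by have := hφ0 x; positivity)
    _ ≤ ρ i ^ p * ((A + 1) / (c * t * ρ i / 2) ^ p) := by
        gcongr
        exact hφx.trans (div_le_div_of_nonneg_left hA (by positivity) (by gcongr))
    _ = (A + 1) * (2 / c) ^ p * t ^ (-p) := by
        rw [show c * t * ρ i / 2 = (c / 2) * t * ρ i by ring, mul_rpow (by positivity) hρi.le,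
          mul_rpow (by positivity) (by positivity), rpow_neg (by positivity),
          div_rpow (by norm_num) hc.le, div_rpow hc.le (by norm_num)]
        field_simp

lemma summable_nat_add_one_rpow_neg (hp : 1 < p) :
    Summable (fun l : ℕ => ((l : ℝ) + 1) ^ (-p)) := by
  exact_mod_cast (summable_nat_add_iff 1).mpr (summable_nat_rpow.mpr (by linarith))

end

theorem aliasing_tail_limit_general (φ : ℝ → ℝ) (hφ_nonneg : ∀ x, 0 ≤ φ x)
    (p A : ℝ) (hp : 1 < p)
    (htail : ∀ ε > (0 : ℝ), ∃ M : ℝ, ∀ x : ℝ, M ≤ |x| → abs (|x| ^ p * φ x - A) < ε)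
    (ρ : ℕ → ℝ) (hρ : Tendsto ρ atTop atTop)
    (lam : ℝ) :
    Tendsto (fun n => ρ n ^ p * ∑' l : ℕ, φ (lam + 2 * π * ((l : ℝ) + 1) * ρ n))
      atTop (nhds (A / (2 * π) ^ p * ∑' l : ℕ, ((l : ℝ) + 1) ^ (-p))) := by
  have hφ := tendsto_rpow_mul_atTop_of_abs_tail htail
  obtain ⟨C, hC⟩ := exists_eventually_norm_rpow_mul_comp_le hφ_nonneg hφ (by linarith) hρ lam
    (c := 2 * π) (by positivity)
  have hlim := tendsto_tsum_of_dominated_convergence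
    ((summable_nat_add_one_rpow_neg hp).mul_left C)
    (fun l : ℕ => tendsto_rpow_mul_comp_add_mul hφ hρ lam (c := 2 * π * ((l : ℝ) + 1))
      (by positivity))
    (hC.mono fun n hn l => hn _ (by simp))
  have hterm (l : ℕ) :
      A / (2 * π * ((l : ℝ) + 1)) ^ p = A / (2 * π) ^ p * ((l : ℝ) + 1) ^ (-p) := by
    rw [mul_rpow (by positivity) (by positivity), rpow_neg (by positivity), div_mul_eq_div_div,
      div_eq_mul_inv _ (_ ^ p)]
  simp only [hterm, tsum_mul_left] at hlim
  exact hlim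

/-- Aliasing-tail convergence: ρₙ^p Σ_{l≥1} φ(λ + 2π l ρₙ) → (A/(2π)^p) Σ_{l≥1} l^{-p}. -/
theorem aliasing_tail_limit (φ : ℝ → ℝ) (hφ_nonneg : ∀ x, 0 ≤ φ x)
    (hφ_int : Integrable φ)
    (p A : ℝ) (hp : 1 < p) (hA : 0 < A)
    (htail : ∀ ε > (0 : ℝ), ∃ M : ℝ, ∀ x : ℝ, M ≤ |x| → abs (|x| ^ p * φ x - A) < ε)
    (ρ : ℕ → ℝ) (hρpos : ∀ n, 0 < ρ n) (hρ : Tendsto ρ atTop atTop)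
    (lam : ℝ) :
    Tendsto (fun n => ρ n ^ p * ∑' l : ℕ, φ (lam + 2 * π * ((l : ℝ) + 1) * ρ n))
      atTop (nhds (A / (2 * π) ^ p * ∑' l : ℕ, ((l : ℝ) + 1) ^ (-p))) :=
  aliasing_tail_limit_general φ hφ_nonneg p A hp htail ρ hρ lam
end

section
/- Let p, q > 1. Consider minimizing over positive sequences ρₙ = n^a and bₙ = n^{-β} (with a ∈ (0,1), β ∈ (0,1)) the maximum of the four rates (ρₙbₙ)^{2q}, (ρₙ/n)^2, ρₙ^{-2p}, and (n bₙ)^{-1}. The minimal achievable order is n^{-2pq/(p+q+2pq)}, attained at a = q/(p+q+2pq) and β = (p+q)/(p+q+2pq). -/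
/-!
With `D = p + q + 2pq`, the exponents `a = q/D`, `β = (p+q)/D` make the three binding rates
`2q(β - a)`, `2pa` and `1 - β` all equal to `2pq/D`, while `2(1 - a)` is larger. Conversely, for
every `(a, β)` the identity `p · 2q(β - a) + q · 2pa + 2pq · (1 - β) = 2pq` exhibits `2pq/D` as a
weighted mean, with weights summing to `D`, of three of the four rates, so their minimum is at
most `2pq/D`.
-/

theorem min_le_div_of_weighted_sum_eq {x y z u v w c : ℝ} (hu : 0 < u) (hv : 0 < v) (hw : 0 < w)
    (hsum : u * x + v * y + w * z = c) : min x (min y z) ≤ c / (u + v + w) := by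
  rw [le_div_iff₀ (by positivity), ← hsum]
  have hx : min x (min y z) ≤ x := min_le_left _ _
  have hy : min x (min y z) ≤ y := (min_le_right _ _).trans (min_le_left _ _)
  have hz : min x (min y z) ≤ z := (min_le_right _ _).trans (min_le_right _ _)
  linarith [mul_le_mul_of_nonneg_left hx hu.le, mul_le_mul_of_nonneg_left hy hv.le,
    mul_le_mul_of_nonneg_left hz hw.le]

theorem rate_min_le {p q : ℝ} (hp : 0 < p) (hq : 0 < q) (a β : ℝ) :
    min (min (2 * q * (β - a)) (2 * (1 - a))) (min (2 * p * a) (1 - β))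
      ≤ 2 * p * q / (p + q + 2 * p * q) := by
  have hmean : min (2 * q * (β - a)) (min (2 * p * a) (1 - β)) ≤ 2 * p * q / (p + q + 2 * p * q) :=
    min_le_div_of_weighted_sum_eq hp hq (by positivity) (by ring)
  exact (min_le_min_right _ (min_le_left _ _)).trans hmean

theorem rate_min_at_optimum {p q : ℝ} (hp : 0 < p) (hq : 0 < q) :
    min (min (2 * q * ((p + q) / (p + q + 2 * p * q) - q / (p + q + 2 * p * q)))
              (2 * (1 - q / (p + q + 2 * p * q))))
         (min (2 * p * (q / (p + q + 2 * p * q)))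
              (1 - (p + q) / (p + q + 2 * p * q)))
        = 2 * p * q / (p + q + 2 * p * q) := by
  have hD : 0 < p + q + 2 * p * q := by positivity
  have hβa : 2 * q * ((p + q) / (p + q + 2 * p * q) - q / (p + q + 2 * p * q))
      = 2 * p * q / (p + q + 2 * p * q) := by
    field_simp; ring
  have ha : 2 * p * (q / (p + q + 2 * p * q)) = 2 * p * q / (p + q + 2 * p * q) := by
    field_simp
  have hβ : 1 - (p + q) / (p + q + 2 * p * q) = 2 * p * q / (p + q + 2 * p * q) := by
    field_simp; ring
  have h1a : 2 * p * q / (p + q + 2 * p * q) ≤ 2 * (1 - q / (p + q + 2 * p * q)) := by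
    have h1a_eq : 2 * (1 - q / (p + q + 2 * p * q)) = 2 * (p + 2 * p * q) / (p + q + 2 * p * q) := by
      field_simp; ring
    rw [h1a_eq]
    exact div_le_div_of_nonneg_right (by nlinarith [mul_pos hp hq]) hD.le
  rw [hβa, ha, hβ, min_eq_left h1a, min_self, min_self]

/-- Optimal rate exponents: the maximum over admissible (a, β) of
min(2q(β−a), 2(1−a), 2pa, 1−β) equals 2pq/(p+q+2pq), attained at
a = q/(p+q+2pq) and β = (p+q)/(p+q+2pq). -/
theorem optimal_rate_exponents (p q : ℝ) (hp : 1 < p) (hq : 1 < q) :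
    (min (min (2 * q * ((p + q) / (p + q + 2 * p * q) - q / (p + q + 2 * p * q)))
              (2 * (1 - q / (p + q + 2 * p * q))))
         (min (2 * p * (q / (p + q + 2 * p * q)))
              (1 - (p + q) / (p + q + 2 * p * q)))
        = 2 * p * q / (p + q + 2 * p * q)) ∧
    (∀ a β : ℝ, 0 < a → a < 1 → 0 < β → β < 1 →
      min (min (2 * q * (β - a)) (2 * (1 - a))) (min (2 * p * a) (1 - β))
        ≤ 2 * p * q / (p + q + 2 * p * q)) :=
  have hp0 : 0 < p := zero_lt_one.trans hp
  have hq0 : 0 < q := zero_lt_one.trans hq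
  ⟨rate_min_at_optimum hp0 hq0, fun a β _ _ _ _ => rate_min_le hp0 hq0 a β⟩
end

section
/- Let g₁, g₂, g₃ : ℝ → ℝ be continuous, even, non-negative, integrable, and non-increasing on [0,∞). If ρₙ → ∞ and n/ρₙ → ∞, then (1/ρₙ³) Σ_{v₁=1}^{n−1} Σ_{v₂=1}^{n−1} Σ_{u=−(n−1)}^{n−1} g₁(v₁/ρₙ) g₂(u/ρₙ) g₃((u+v₂)/ρₙ) converges to (∫_0^∞ g₁) · ∫_0^∞ [∫_{−∞}^{∞} g₂(u) g₃(u+v) du] dv as n → ∞. -/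
open MeasureTheory Filter Set Topology

/-!
The triple sum factors into a one-dimensional Riemann sum for `g₁` and a two-dimensional one for
`(v, u) ↦ g₂ u * g₃ (u + v)`, both with mesh `1 / ρₙ`. Each is the integral of a step function
that is constant on the cells `{x | ⌈ρₙ x⌉ = k}`. As `ρₙ → ∞` the step functions converge pointwise
by continuity, and since `n / ρₙ → ∞` the truncated index ranges eventually reach every point of
`(0, ∞)`, resp. `(0, ∞) × ℝ`. Monotonicity and evenness dominate the step functions by the
integrable majorants `x ↦ g (max (|x| - c) 0)`, so dominated convergence applies.
-/

section Cells

variable {X ι : Type*} [MeasurableSpace X] [MeasurableSpace ι] [MeasurableSingletonClass ι]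
  {μ : Measure X}

theorem integral_indicator_preimage_finset {c : X → ι} (hc : Measurable c) {S : Finset ι}
    {V : ℝ} (hV₀ : 0 ≤ V) (hV : ∀ k ∈ S, μ (c ⁻¹' {k}) = ENNReal.ofReal V) (φ : ι → ℝ) :
    ∫ x, (c ⁻¹' S).indicator (φ ∘ c) x ∂μ = V * ∑ k ∈ S, φ k := by
  classical
  have hcell : ∀ k, MeasurableSet (c ⁻¹' {k}) := fun k => hc (measurableSet_singleton k)
  have hsum : (c ⁻¹' S).indicator (φ ∘ c) =
      fun x => ∑ k ∈ S, (c ⁻¹' {k}).indicator (fun _ => φ k) x := by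
    ext x
    simp [Set.indicator_apply, Finset.sum_ite_eq]
  rw [hsum, integral_finsetSum _ fun k hk => (integrable_indicator_iff (hcell k)).2
    (integrableOn_const (by simp [hV k hk])), Finset.mul_sum]
  refine Finset.sum_congr rfl fun k hk => ?_
  rw [integral_indicator_const _ (hcell k), measureReal_def, hV k hk, ENNReal.toReal_ofReal hV₀,
    smul_eq_mul]

theorem tendsto_mul_sum_of_dominated [Countable ι] {c : ℕ → X → ι} (hc : ∀ n, Measurable (c n))
    {S : ℕ → Finset ι} {V : ℕ → ℝ} {φ : ℕ → ι → ℝ} {f b : X → ℝ}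
    (hV : ∀ᶠ n in atTop, 0 ≤ V n ∧ ∀ k ∈ S n, μ (c n ⁻¹' {k}) = ENNReal.ofReal (V n))
    (hb : Integrable b μ)
    (hbound : ∀ᶠ n in atTop, ∀ᵐ x ∂μ, ‖(c n ⁻¹' S n).indicator (φ n ∘ c n) x‖ ≤ b x)
    (hlim : ∀ᵐ x ∂μ,
      Tendsto (fun n => (c n ⁻¹' S n).indicator (φ n ∘ c n) x) atTop (𝓝 (f x))) :
    Tendsto (fun n => V n * ∑ k ∈ S n, φ n k) atTop (𝓝 (∫ x, f x ∂μ)) := by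
  have hmeas : ∀ n, AEStronglyMeasurable ((c n ⁻¹' S n).indicator (φ n ∘ c n)) μ := fun n =>
    (((measurable_of_countable _).comp (hc n)).indicator
      (hc n (S n).measurableSet)).aestronglyMeasurable
  refine (tendsto_integral_filter_of_dominated_convergence b (.of_forall hmeas) hbound hb
    hlim).congr' ?_
  filter_upwards [hV] with n ⟨hV₀, hV⟩
  exact integral_indicator_preimage_finset (hc n) hV₀ hV (φ n)

end Cells

theorem ceil_mul_div_mem_Icc {r : ℝ} (hr : 0 < r) (x : ℝ) :
    (⌈r * x⌉ : ℝ) / r ∈ Icc x (x + r⁻¹) := by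
  rw [mem_Icc, le_div_iff₀ hr, div_le_iff₀ hr, add_mul, inv_mul_cancel₀ hr.ne']
  constructor <;> nlinarith [Int.le_ceil (r * x), Int.ceil_lt_add_one (r * x)]

theorem abs_ceil_mul_div_sub_le {r : ℝ} (hr : 1 ≤ r) (x : ℝ) :
    |(⌈r * x⌉ : ℝ) / r - x| ≤ 1 := by
  obtain ⟨h₁, h₂⟩ := ceil_mul_div_mem_Icc (one_pos.trans_le hr) x
  rw [abs_le]
  constructor <;> linarith [inv_le_one_of_one_le₀ hr]

theorem abs_ceil_mul_div_add_sub_le {r : ℝ} (hr : 1 ≤ r) (x y : ℝ) :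
    |(⌈r * x⌉ : ℝ) / r + ⌈r * y⌉ / r - (x + y)| ≤ 2 := by
  have hx := abs_le.1 (abs_ceil_mul_div_sub_le hr x)
  have hy := abs_le.1 (abs_ceil_mul_div_sub_le hr y)
  rw [abs_le]
  constructor <;> linarith

theorem preimage_ceil_mul_singleton {r : ℝ} (hr : 0 < r) (k : ℤ) :
    (fun x => ⌈r * x⌉) ⁻¹' {k} = Ioc ((k - 1) / r) (k / r) := by
  ext x
  simp only [mem_preimage, mem_singleton_iff, Int.ceil_eq_iff, mem_Ioc, div_lt_iff₀' hr,
    le_div_iff₀' hr]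

theorem preimage_natCeil_mul_singleton {r : ℝ} (hr : 0 < r) {k : ℕ} (hk : k ≠ 0) :
    (fun x => ⌈r * x⌉₊) ⁻¹' {k} = Ioc ((k - 1) / r) (k / r) := by
  ext x
  simp only [mem_preimage, mem_singleton_iff, Nat.ceil_eq_iff hk, mem_Ioc, div_lt_iff₀' hr,
    le_div_iff₀' hr, Nat.cast_pred (Nat.pos_of_ne_zero hk)]

theorem volume_Ioc_sub_one_div {r : ℝ} (hr : 0 < r) (a : ℝ) :
    volume (Ioc ((a - 1) / r) (a / r)) = ENNReal.ofReal r⁻¹ := by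
  rw [Real.volume_Ioc]
  congr 1
  field_simp
  ring

theorem volume_preimage_ceil_mul_singleton {r : ℝ} (hr : 0 < r) (k : ℤ) :
    volume ((fun x => ⌈r * x⌉) ⁻¹' {k}) = ENNReal.ofReal r⁻¹ := by
  rw [preimage_ceil_mul_singleton hr, volume_Ioc_sub_one_div hr]

theorem volume_restrict_Ioi_preimage_natCeil_mul_singleton {r : ℝ} (hr : 0 < r) {k : ℕ}
    (hk : k ≠ 0) :
    volume.restrict (Ioi 0) ((fun x => ⌈r * x⌉₊) ⁻¹' {k}) = ENNReal.ofReal r⁻¹ := by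
  have hpos : (fun x => ⌈r * x⌉₊) ⁻¹' {k} ⊆ Ioi 0 := fun x (hx : ⌈r * x⌉₊ = k) =>
    pos_of_mul_pos_right (Nat.ceil_pos.1 (hx ▸ Nat.pos_of_ne_zero hk)) hr.le
  rw [Measure.restrict_eq_self _ hpos, preimage_natCeil_mul_singleton hr hk,
    volume_Ioc_sub_one_div hr]

section Scale

variable {ρ : ℕ → ℝ} (hρ : Tendsto ρ atTop atTop)
include hρ

theorem tendsto_ceil_mul_div (x : ℝ) :
    Tendsto (fun n => (⌈ρ n * x⌉ : ℝ) / ρ n) atTop (𝓝 x) := by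
  have hupper : Tendsto (fun n => x + (ρ n)⁻¹) atTop (𝓝 x) := by
    simpa using tendsto_const_nhds.add hρ.inv_tendsto_atTop
  refine tendsto_of_tendsto_of_tendsto_of_le_of_le' tendsto_const_nhds hupper ?_ ?_ <;>
  filter_upwards [hρ.eventually_gt_atTop 0] with n hn
  exacts [(ceil_mul_div_mem_Icc hn x).1, (ceil_mul_div_mem_Icc hn x).2]

variable (hnρ : Tendsto (fun n : ℕ => (n : ℝ) / ρ n) atTop atTop)
include hnρ

theorem eventually_mul_abs_le_sub_one (x : ℝ) : ∀ᶠ n : ℕ in atTop, ρ n * |x| ≤ n - 1 := by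
  filter_upwards [hρ.eventually_ge_atTop 1, hnρ.eventually_ge_atTop (|x| + 1)] with n h₁ h₂
  rw [le_div_iff₀ (one_pos.trans_le h₁)] at h₂
  nlinarith

theorem eventually_natCeil_mul_mem_Icc {x : ℝ} (hx : 0 < x) :
    ∀ᶠ n : ℕ in atTop, ⌈ρ n * x⌉₊ ∈ Finset.Icc 1 (n - 1) := by
  filter_upwards [eventually_mul_abs_le_sub_one hρ hnρ x, hρ.eventually_gt_atTop 0] with n h hn
  rw [abs_of_pos hx] at h
  have h1n : 1 ≤ n := by exact_mod_cast (show (1 : ℝ) ≤ n by nlinarith)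
  refine Finset.mem_Icc.2 ⟨Nat.one_le_ceil_iff.2 (mul_pos hn hx), Nat.ceil_le.2 ?_⟩
  rwa [Nat.cast_pred h1n]

theorem eventually_ceil_mul_mem_Icc (x : ℝ) :
    ∀ᶠ n : ℕ in atTop, ⌈ρ n * x⌉ ∈ Finset.Icc (-(n : ℤ) + 1) ((n : ℤ) - 1) := by
  filter_upwards [eventually_mul_abs_le_sub_one hρ hnρ x, hρ.eventually_gt_atTop 0] with n h hn
  rw [Finset.mem_Icc, Int.le_ceil_iff, Int.ceil_le]
  push_cast
  constructor <;> nlinarith [neg_abs_le x, le_abs_self x]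

end Scale

theorem apply_le_apply_max_abs_sub {g : ℝ → ℝ} (hg_even : ∀ x, g (-x) = g x)
    (hg_anti : AntitoneOn g (Ici 0)) {c y u : ℝ} (h : |y - u| ≤ c) :
    g y ≤ g (max (|u| - c) 0) := by
  have hy : g y = g |y| := by
    rcases abs_choice y with hy | hy <;> rw [hy]
    exact (hg_even y).symm
  have hle : max (|u| - c) 0 ≤ |y| := by
    refine max_le ?_ (abs_nonneg y)
    linarith [abs_sub_abs_le_abs_sub u y, abs_sub_comm y u]
  rw [hy]
  exact hg_anti (mem_Ici.2 (le_max_right _ _)) (mem_Ici.2 ((le_max_right _ _).trans hle)) hle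

theorem MeasureTheory.Integrable.comp_max_abs_sub {g : ℝ → ℝ} (hg : Continuous g)
    (hg_even : ∀ x, g (-x) = g x) (hg_int : Integrable g) {c : ℝ} (hc : 0 ≤ c) :
    Integrable (fun x => g (max (|x| - c) 0)) := by
  have hleft : IntegrableOn (fun x => g (max (|x| - c) 0)) (Iic (-c)) := by
    refine (hg_int.comp_add_right c).integrableOn.congr_fun (fun x hx => ?_) measurableSet_Iic
    rw [abs_of_nonpos (by linarith [mem_Iic.1 hx, hc]), max_eq_left (by linarith [mem_Iic.1 hx]),
      ← hg_even]
    ring_nf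
  have hright : IntegrableOn (fun x => g (max (|x| - c) 0)) (Ici c) := by
    refine (hg_int.comp_sub_right c).integrableOn.congr_fun (fun x hx => ?_) measurableSet_Ici
    rw [abs_of_nonneg (by linarith [mem_Ici.1 hx, hc]), max_eq_left (by linarith [mem_Ici.1 hx])]
  have hmid : IntegrableOn (fun x => g (max (|x| - c) 0)) (Icc (-c) c) :=
    (hg.comp (by fun_prop)).integrableOn_Icc
  have hcover : Iic (-c) ∪ Icc (-c) c ∪ Ici c = univ := by
    ext x
    simp only [mem_union, mem_Iic, mem_Icc, mem_Ici, mem_univ, iff_true]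
    by_contra! h
    linarith [h.1.2 h.1.1.le]
  rw [← integrableOn_univ, ← hcover]
  exact (hleft.union hmid).union hright

theorem MeasureTheory.Integrable.mul_comp_add_prod {G : Type*} [AddGroup G] [MeasurableSpace G]
    [MeasurableAdd₂ G] {μ ν : Measure G} [SFinite μ] [SFinite ν] [μ.IsAddLeftInvariant]
    {f g : G → ℝ} (hf : Integrable f ν) (hg : Integrable g μ) :
    Integrable (fun p : G × G => f p.2 * g (p.2 + p.1)) (μ.prod ν) :=
  (measurePreserving_prod_add_swap μ ν).integrable_comp_of_integrable (hf.mul_prod hg)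

theorem MeasureTheory.Integrable.mul_comp_add_restrict_prod {f g : ℝ → ℝ} (hf : Integrable f)
    (hg : Integrable g) (s : Set ℝ) :
    Integrable (fun p : ℝ × ℝ => f p.2 * g (p.2 + p.1)) ((volume.restrict s).prod volume) := by
  rw [Measure.restrict_prod_eq_prod_univ]
  exact (hf.mul_comp_add_prod hg).restrict

theorem tendsto_riemannSum_Ioi {g : ℝ → ℝ} (hg : Continuous g) (hg_nonneg : ∀ x, 0 ≤ g x)
    (hg_int : IntegrableOn g (Ioi 0)) (hg_anti : AntitoneOn g (Ioi 0)) {ρ : ℕ → ℝ}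
    (hρ : Tendsto ρ atTop atTop) (hnρ : Tendsto (fun n : ℕ => (n : ℝ) / ρ n) atTop atTop) :
    Tendsto (fun n : ℕ => (ρ n)⁻¹ * ∑ k ∈ Finset.Icc 1 (n - 1), g (k / ρ n)) atTop
      (𝓝 (∫ x in Ioi 0, g x)) := by
  set c : ℕ → ℝ → ℕ := fun n x => ⌈ρ n * x⌉₊
  have hcell : ∀ n, 0 < ρ n → ∀ x ∈ c n ⁻¹' Finset.Icc 1 (n - 1),
      0 < x ∧ (c n x : ℝ) = ⌈ρ n * x⌉ := by
    intro n hn x hx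
    have hx : 0 < x := pos_of_mul_pos_right
      (Nat.one_le_ceil_iff.1 (Finset.mem_Icc.1 hx).1) hn.le
    exact ⟨hx, natCast_ceil_eq_intCast_ceil (mul_pos hn hx).le⟩
  refine tendsto_mul_sum_of_dominated (c := c) (fun n => Nat.measurable_ceil.comp
    (measurable_const_mul _)) ?_ hg_int ?_ ?_
  · filter_upwards [hρ.eventually_gt_atTop 0] with n hn
    refine ⟨inv_nonneg.2 hn.le, fun k hk => ?_⟩
    exact volume_restrict_Ioi_preimage_natCeil_mul_singleton hn
      (Nat.one_le_iff_ne_zero.1 (Finset.mem_Icc.1 hk).1)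
  · filter_upwards [hρ.eventually_gt_atTop 0] with n hn
    refine ae_of_all _ fun x => ?_
    by_cases hx : x ∈ c n ⁻¹' Finset.Icc 1 (n - 1)
    · obtain ⟨hx₀, hcx⟩ := hcell n hn x hx
      rw [indicator_of_mem hx, Function.comp_apply, hcx, Real.norm_of_nonneg (hg_nonneg _)]
      exact hg_anti hx₀ (hx₀.trans_le (ceil_mul_div_mem_Icc hn x).1) (ceil_mul_div_mem_Icc hn x).1
    · rw [indicator_of_notMem hx, norm_zero]
      exact hg_nonneg x
  · filter_upwards [ae_restrict_mem measurableSet_Ioi] with x hx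
    refine ((hg.tendsto x).comp (tendsto_ceil_mul_div hρ x)).congr' ?_
    filter_upwards [eventually_natCeil_mul_mem_Icc hρ hnρ hx, hρ.eventually_gt_atTop 0]
      with n hmem hn
    have hmem : x ∈ c n ⁻¹' Finset.Icc 1 (n - 1) := Finset.mem_coe.2 hmem
    rw [indicator_of_mem hmem]
    exact congrArg (fun t => g (t / ρ n)) (hcell n hn x hmem).2.symm

theorem tendsto_riemannSum_Ioi_integral_mul_comp_add {g₂ g₃ : ℝ → ℝ}
    (hg₂ : Continuous g₂) (hg₃ : Continuous g₃)
    (hg₂_even : ∀ x, g₂ (-x) = g₂ x) (hg₃_even : ∀ x, g₃ (-x) = g₃ x)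
    (hg₂_nonneg : ∀ x, 0 ≤ g₂ x) (hg₃_nonneg : ∀ x, 0 ≤ g₃ x)
    (hg₂_int : Integrable g₂) (hg₃_int : Integrable g₃)
    (hg₂_anti : AntitoneOn g₂ (Ici 0)) (hg₃_anti : AntitoneOn g₃ (Ici 0)) {ρ : ℕ → ℝ}
    (hρ : Tendsto ρ atTop atTop) (hnρ : Tendsto (fun n : ℕ => (n : ℝ) / ρ n) atTop atTop) :
    Tendsto (fun n : ℕ => (ρ n)⁻¹ * (ρ n)⁻¹ * ∑ v ∈ Finset.Icc 1 (n - 1),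
        ∑ u ∈ Finset.Icc (-(n : ℤ) + 1) ((n : ℤ) - 1), g₂ (u / ρ n) * g₃ ((u + v) / ρ n))
      atTop (𝓝 (∫ v in Ioi 0, ∫ u, g₂ u * g₃ (u + v))) := by
  rw [← integral_prod _ (hg₂_int.mul_comp_add_restrict_prod hg₃_int _)]
  set c : ℕ → ℝ × ℝ → ℕ × ℤ := fun n => Prod.map (fun v => ⌈ρ n * v⌉₊) (fun u => ⌈ρ n * u⌉)
  set S : ℕ → Finset (ℕ × ℤ) := fun n =>
    Finset.Icc 1 (n - 1) ×ˢ Finset.Icc (-(n : ℤ) + 1) ((n : ℤ) - 1)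
  set φ : ℕ → ℕ × ℤ → ℝ := fun n q => g₂ (q.2 / ρ n) * g₃ ((q.2 + q.1) / ρ n)
  have hval : ∀ n, 0 < ρ n → ∀ p ∈ c n ⁻¹' S n, (c n ⁻¹' S n).indicator (φ n ∘ c n) p =
      g₂ (⌈ρ n * p.2⌉ / ρ n) * g₃ (⌈ρ n * p.2⌉ / ρ n + ⌈ρ n * p.1⌉ / ρ n) := by
    intro n hn p hp
    have hp₁ : 0 < ρ n * p.1 :=
      Nat.one_le_ceil_iff.1 (Finset.mem_Icc.1 (Finset.mem_product.1 hp).1).1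
    rw [indicator_of_mem hp, ← add_div, ← natCast_ceil_eq_intCast_ceil hp₁.le]
    rfl
  refine (tendsto_mul_sum_of_dominated (c := c) (S := S) (φ := φ)
    (b := fun p => g₂ (max (|p.2| - 1) 0) * g₃ (max (|p.2 + p.1| - 2) 0))
    (fun n => (Nat.measurable_ceil.comp (measurable_const_mul _)).prodMap
      (Int.measurable_ceil.comp (measurable_const_mul _))) ?_ ?_ ?_ ?_).congr
    fun n => by rw [Finset.sum_product]
  · filter_upwards [hρ.eventually_gt_atTop 0] with n hn
    refine ⟨by positivity, fun q hq => ?_⟩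
    rw [← singleton_prod_singleton, preimage_prod_map_prod, Measure.prod_prod,
      volume_restrict_Ioi_preimage_natCeil_mul_singleton hn
        (Nat.one_le_iff_ne_zero.1 (Finset.mem_Icc.1 (Finset.mem_product.1 hq).1).1),
      volume_preimage_ceil_mul_singleton hn, ENNReal.ofReal_mul (inv_nonneg.2 hn.le)]
  · exact (hg₂_int.comp_max_abs_sub hg₂ hg₂_even zero_le_one).mul_comp_add_restrict_prod
      (hg₃_int.comp_max_abs_sub hg₃ hg₃_even zero_le_two) _
  · filter_upwards [hρ.eventually_ge_atTop 1] with n hn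
    refine ae_of_all _ fun p => ?_
    by_cases hp : p ∈ c n ⁻¹' S n
    · rw [hval n (one_pos.trans_le hn) p hp,
        Real.norm_of_nonneg (mul_nonneg (hg₂_nonneg _) (hg₃_nonneg _))]
      exact mul_le_mul
        (apply_le_apply_max_abs_sub hg₂_even hg₂_anti (abs_ceil_mul_div_sub_le hn p.2))
        (apply_le_apply_max_abs_sub hg₃_even hg₃_anti (abs_ceil_mul_div_add_sub_le hn p.2 p.1))
        (hg₃_nonneg _) (hg₂_nonneg _)
    · rw [indicator_of_notMem hp, norm_zero]
      exact mul_nonneg (hg₂_nonneg _) (hg₃_nonneg _)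
  · filter_upwards [Measure.quasiMeasurePreserving_fst.ae (ae_restrict_mem measurableSet_Ioi)]
      with p hp
    have hlim := ((hg₂.tendsto _).comp (tendsto_ceil_mul_div hρ p.2)).mul
      ((hg₃.tendsto _).comp ((tendsto_ceil_mul_div hρ p.2).add (tendsto_ceil_mul_div hρ p.1)))
    refine hlim.congr' ?_
    filter_upwards [eventually_natCeil_mul_mem_Icc hρ hnρ hp,
      eventually_ceil_mul_mem_Icc hρ hnρ p.2, hρ.eventually_gt_atTop 0] with n h₁ h₂ hn
    exact (hval n hn p (Finset.mem_product.2 ⟨h₁, h₂⟩)).symm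

theorem triple_riemann_sum_general (g₁ g₂ g₃ : ℝ → ℝ)
    (hg₁ : Continuous g₁) (hg₂ : Continuous g₂) (hg₃ : Continuous g₃)
    (hg₂_even : ∀ x, g₂ (-x) = g₂ x)
    (hg₃_even : ∀ x, g₃ (-x) = g₃ x)
    (hg₁_nonneg : ∀ x, 0 ≤ g₁ x) (hg₂_nonneg : ∀ x, 0 ≤ g₂ x)
    (hg₃_nonneg : ∀ x, 0 ≤ g₃ x)
    (hg₁_int : Integrable g₁) (hg₂_int : Integrable g₂) (hg₃_int : Integrable g₃)
    (hg₁_anti : AntitoneOn g₁ (Ici (0 : ℝ))) (hg₂_anti : AntitoneOn g₂ (Ici (0 : ℝ)))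
    (hg₃_anti : AntitoneOn g₃ (Ici (0 : ℝ)))
    (ρ : ℕ → ℝ)
    (hρ : Tendsto ρ atTop atTop)
    (hnρ : Tendsto (fun n : ℕ => (n : ℝ) / ρ n) atTop atTop) :
    Tendsto (fun n => (1 / (ρ n) ^ 3) *
        ∑ v₁ ∈ Finset.Icc 1 (n - 1), ∑ v₂ ∈ Finset.Icc 1 (n - 1),
          ∑ u ∈ Finset.Icc (-(n : ℤ) + 1) ((n : ℤ) - 1),
            g₁ ((v₁ : ℝ) / ρ n) * g₂ ((u : ℝ) / ρ n) * g₃ (((u : ℝ) + (v₂ : ℝ)) / ρ n))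
      atTop
      (nhds ((∫ v in Ici (0 : ℝ), g₁ v) *
        ∫ v in Ici (0 : ℝ), ∫ u : ℝ, g₂ u * g₃ (u + v))) := by
  have h₁ := tendsto_riemannSum_Ioi hg₁ hg₁_nonneg hg₁_int.integrableOn
    (hg₁_anti.mono Ioi_subset_Ici_self) hρ hnρ
  have h₂₃ := tendsto_riemannSum_Ioi_integral_mul_comp_add hg₂ hg₃ hg₂_even hg₃_even hg₂_nonneg
    hg₃_nonneg hg₂_int hg₃_int hg₂_anti hg₃_anti hρ hnρ
  rw [integral_Ici_eq_integral_Ioi, integral_Ici_eq_integral_Ioi]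
  refine (h₁.mul h₂₃).congr fun n => ?_
  have hfactor : ∑ v₁ ∈ Finset.Icc 1 (n - 1), ∑ v₂ ∈ Finset.Icc 1 (n - 1),
        ∑ u ∈ Finset.Icc (-(n : ℤ) + 1) ((n : ℤ) - 1),
          g₁ ((v₁ : ℝ) / ρ n) * g₂ ((u : ℝ) / ρ n) * g₃ (((u : ℝ) + (v₂ : ℝ)) / ρ n) =
      (∑ v₁ ∈ Finset.Icc 1 (n - 1), g₁ ((v₁ : ℝ) / ρ n)) *
        ∑ v₂ ∈ Finset.Icc 1 (n - 1), ∑ u ∈ Finset.Icc (-(n : ℤ) + 1) ((n : ℤ) - 1),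
          g₂ ((u : ℝ) / ρ n) * g₃ (((u : ℝ) + (v₂ : ℝ)) / ρ n) := by
    simp_rw [Finset.sum_mul_sum, Finset.mul_sum, mul_assoc]
  rw [hfactor]
  ring

/-- Triple Riemann-sum convergence for the fourth-cumulant bound. -/
theorem triple_riemann_sum (g₁ g₂ g₃ : ℝ → ℝ)
    (hg₁ : Continuous g₁) (hg₂ : Continuous g₂) (hg₃ : Continuous g₃)
    (hg₁_even : ∀ x, g₁ (-x) = g₁ x) (hg₂_even : ∀ x, g₂ (-x) = g₂ x)
    (hg₃_even : ∀ x, g₃ (-x) = g₃ x)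
    (hg₁_nonneg : ∀ x, 0 ≤ g₁ x) (hg₂_nonneg : ∀ x, 0 ≤ g₂ x)
    (hg₃_nonneg : ∀ x, 0 ≤ g₃ x)
    (hg₁_int : Integrable g₁) (hg₂_int : Integrable g₂) (hg₃_int : Integrable g₃)
    (hg₁_anti : AntitoneOn g₁ (Ici (0 : ℝ))) (hg₂_anti : AntitoneOn g₂ (Ici (0 : ℝ)))
    (hg₃_anti : AntitoneOn g₃ (Ici (0 : ℝ)))
    (ρ : ℕ → ℝ) (hρpos : ∀ n, 0 < ρ n)
    (hρ : Tendsto ρ atTop atTop)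
    (hnρ : Tendsto (fun n : ℕ => (n : ℝ) / ρ n) atTop atTop) :
    Tendsto (fun n => (1 / (ρ n) ^ 3) *
        ∑ v₁ ∈ Finset.Icc 1 (n - 1), ∑ v₂ ∈ Finset.Icc 1 (n - 1),
          ∑ u ∈ Finset.Icc (-(n : ℤ) + 1) ((n : ℤ) - 1),
            g₁ ((v₁ : ℝ) / ρ n) * g₂ ((u : ℝ) / ρ n) * g₃ (((u : ℝ) + (v₂ : ℝ)) / ρ n))
      atTop
      (nhds ((∫ v in Ici (0 : ℝ), g₁ v) *
        ∫ v in Ici (0 : ℝ), ∫ u : ℝ, g₂ u * g₃ (u + v))) :=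
  triple_riemann_sum_general g₁ g₂ g₃ hg₁ hg₂ hg₃ hg₂_even hg₃_even hg₁_nonneg hg₂_nonneg hg₃_nonneg
    hg₁_int hg₂_int hg₃_int hg₁_anti hg₂_anti hg₃_anti ρ hρ hnρ
end

section
/- Let p > 1, q > 1. The mean squared error rate exponent for the regular-sampling estimator, 2pq/(p+q+2pq), is strictly less than the Poisson-sampling exponent 2q/(2q+1) for all finite p; the two exponents have equal limit 2q/(2q+1) as p → ∞; and for q non-integer, 2pq/(p+q+2pq) > 2⌊q⌋/(2⌊q⌋+1) if and only if p > q⌊q⌋/(q−⌊q⌋). -/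
/-!
After clearing the positive denominators, the strict inequality becomes `0 < 2q²`, and
comparing with the Poisson exponent at smoothness `m = ⌊q⌋` becomes `m (p + q) < p q`,
i.e. `q m < p (q - m)`. The limit follows from `2pq/(p+q+2pq) = 2q/(1 + 2q + q/p)`.
-/

open Filter

noncomputable def regularExponent (p q : ℝ) : ℝ := 2 * p * q / (p + q + 2 * p * q)

noncomputable def poissonExponent (q : ℝ) : ℝ := 2 * q / (2 * q + 1)

section

variable {p q : ℝ}

lemma regularExponent_denom_pos (hp : 0 ≤ p) (hq : 0 < q) : 0 < p + q + 2 * p * q := by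
  positivity

theorem regularExponent_lt_poissonExponent (hp : 0 ≤ p) (hq : 0 < q) :
    regularExponent p q < poissonExponent q := by
  unfold regularExponent poissonExponent
  rw [div_lt_div_iff₀ (regularExponent_denom_pos hp hq) (by positivity)]
  nlinarith [sq_pos_of_pos hq]

theorem tendsto_regularExponent_atTop (hq : 0 ≤ q) :
    Tendsto (fun p => regularExponent p q) atTop (nhds (poissonExponent q)) := by
  have h_inv : Tendsto (fun p : ℝ => q / p) atTop (nhds 0) :=
    tendsto_const_nhds.div_atTop tendsto_id
  have h_lim : Tendsto (fun p : ℝ => 2 * q / ((1 + 2 * q) + q / p)) atTop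
      (nhds (2 * q / ((1 + 2 * q) + 0))) :=
    tendsto_const_nhds.div (tendsto_const_nhds.add h_inv) (by positivity)
  rw [add_zero, add_comm] at h_lim
  refine h_lim.congr' ?_
  filter_upwards [eventually_gt_atTop 0] with p hp
  unfold regularExponent
  field_simp
  ring

theorem lt_regularExponent_iff {m : ℝ} (hp : 0 ≤ p) (hm : 0 ≤ m) (hmq : m < q) :
    poissonExponent m < regularExponent p q ↔ q * m / (q - m) < p := by
  unfold regularExponent poissonExponent
  rw [div_lt_div_iff₀ (by positivity) (regularExponent_denom_pos hp (hm.trans_lt hmq)),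
    div_lt_iff₀ (sub_pos.mpr hmq)]
  constructor <;> intro h <;> nlinarith

end

/-- Comparison of the MSE rate exponents of the regular-sampling estimator,
2pq/(p+q+2pq), and the Poisson-sampling estimator, 2q/(2q+1). -/
theorem rate_exponent_comparison (q : ℝ) (hq : 1 < q) :
    (∀ p : ℝ, 1 < p →
      2 * p * q / (p + q + 2 * p * q) < 2 * q / (2 * q + 1)) ∧
    Tendsto (fun p : ℝ => 2 * p * q / (p + q + 2 * p * q)) atTop
      (nhds (2 * q / (2 * q + 1))) ∧
    (((⌊q⌋ : ℝ) < q) → ∀ p : ℝ, 1 < p →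
      (2 * ((⌊q⌋ : ℝ)) / (2 * ((⌊q⌋ : ℝ)) + 1) < 2 * p * q / (p + q + 2 * p * q)
        ↔ q * (⌊q⌋ : ℝ) / (q - (⌊q⌋ : ℝ)) < p)) := by
  have hq0 : 0 < q := zero_lt_one.trans hq
  have h_floor : (0 : ℝ) ≤ ⌊q⌋ := by exact_mod_cast Int.floor_nonneg.mpr hq0.le
  exact ⟨fun p hp => regularExponent_lt_poissonExponent (zero_le_one.trans hp.le) hq0,
    tendsto_regularExponent_atTop hq0.le,
    fun h_frac p hp => lt_regularExponent_iff (zero_le_one.trans hp.le) h_floor h_frac⟩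
end
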